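/- arXiv:2201.13115 — 4 statements merged into one kernel-verified Lean document; each statement's English description precedes it below -/
import Mathlib

section
/- Let G be a graph, T ⊆ V(G), and let A₁ and A₂ be two edge-disjoint T-connectors in G. Then A₁ ∪ A₂ contains a connected subgraph C in which every vertex has even degree and which contains every vertex of T. -/
open SimpleGraph

/-- The line graph of a hypergraph given by hyperedges `He : E → Finset V`:
vertices are hyperedges, two adjacent iff distinct and intersecting. -/
def hLineGraph {V E : Type} (He : E → Finset V) : SimpleGraph E where
  Adj e f := e ≠ f ∧ ∃ v, v ∈ He e ∧ v ∈ He f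
  symm := by constructor; rintro e f ⟨h, v, h1, h2⟩; exact ⟨h.symm, v, h2, h1⟩
  loopless := by constructor; rintro e ⟨h, _⟩; exact h rfl

/-- The incidence graph of a hypergraph: bipartite on `V ⊕ E`, with
`inl v` (black) adjacent to `inr e` (white) iff `v ∈ e`. -/
def incGraph {V E : Type} (He : E → Finset V) : SimpleGraph (V ⊕ E) where
  Adj x y := (∃ v e, x = Sum.inl v ∧ y = Sum.inr e ∧ v ∈ He e) ∨
             (∃ v e, x = Sum.inr e ∧ y = Sum.inl v ∧ v ∈ He e)
  symm := by constructor; rintro x y (⟨v, e, h1, h2, h3⟩ | ⟨v, e, h1, h2, h3⟩)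
             · exact Or.inr ⟨v, e, h2, h1, h3⟩
             · exact Or.inl ⟨v, e, h2, h1, h3⟩
  loopless := by constructor; rintro x (⟨v, e, h1, h2, _⟩ | ⟨v, e, h1, h2, _⟩) <;> simp_all

/-- `T` is `k`-edge-connected in `G`: any two vertices of `T` are joined by
`k` pairwise edge-disjoint paths. -/
def EdgeConnectedIn {V : Type} (G : SimpleGraph V) (T : Set V) (k : ℕ) : Prop :=
  ∀ s₁ ∈ T, ∀ s₂ ∈ T, ∃ p : Fin k → G.Walk s₁ s₂,
    (∀ i, (p i).IsPath) ∧ ∀ i j, i ≠ j → ∀ e, e ∈ (p i).edges → e ∉ (p j).edges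

/-- `G` is `k`-connected: more than `k` vertices, and removing fewer than `k`
vertices leaves a connected graph. -/
def IsKConnected {V : Type} (G : SimpleGraph V) (k : ℕ) : Prop :=
  k < Nat.card V ∧ ∀ S : Set V, S.ncard < k → (G.induce (Sᶜ : Set V)).Connected

/-- A `T`-connector: a family of pairwise edge-disjoint `T`-paths (endpoints in `T`,
internal vertices outside `T`) such that short-cutting all of them yields a graph whose
induced subgraph on `T` is connected. -/
structure TConnector {V : Type} (G : SimpleGraph V) (T : Set V) where
  ι : Type
  finite : Finite ι
  a : ι → V
  b : ι → V
  walk : (i : ι) → G.Walk (a i) (b i)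
  isPath : ∀ i, (walk i).IsPath
  a_mem : ∀ i, a i ∈ T
  b_mem : ∀ i, b i ∈ T
  internal : ∀ i v, v ∈ (walk i).support → v ∈ T → v = a i ∨ v = b i
  edgeDisj : ∀ i j, i ≠ j → ∀ e, e ∈ (walk i).edges → e ∉ (walk j).edges
  shortcut_conn :
    ((SimpleGraph.fromEdgeSet (⋃ i, {s(a i, b i)})).induce T).Connected

/-- The edge set of a `T`-connector (the union of the edges of its paths). -/
def TConnector.edgeSet {V : Type} {G : SimpleGraph V} {T : Set V}
    (C : TConnector G T) : Set (Sym2 V) :=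
  ⋃ i, {e | e ∈ (C.walk i).edges}

/-- The `T`-connector viewed as a graph (the union of its paths). -/
def TConnector.graph {V : Type} {G : SimpleGraph V} {T : Set V}
    (C : TConnector G T) : SimpleGraph V :=
  SimpleGraph.fromEdgeSet C.edgeSet

/-- A closed `W`-quasitrail: a closed walk traversing each edge at most twice such
that every doubly-traversed edge `e` has an endpoint `w ∈ W` visited exactly once
whose predecessor and successor edges both equal `e`. -/
def IsClosedQuasitrail {V : Type} [DecidableEq V] (G : SimpleGraph V) (W : Set V)
    {x : V} (p : G.Walk x x) : Prop :=
  (∀ e, p.edges.count e ≤ 2) ∧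
  ∀ e, p.edges.count e = 2 →
    ∃ w u, w ∈ W ∧ e = s(u, w) ∧ p.support.tail.count w = 1 ∧
      ∃ d₁ d₂ : G.Dart, d₁.toProd = (u, w) ∧ d₂.toProd = (w, u) ∧
        [d₁, d₂] <:+: (p.darts ++ p.darts)

/-!
Work over `ZMod 2`, where the boundary of an `a`-`b` walk (the parity of its degrees) is
`a + b`. The boundary of `A₁` is a sum of terms `u + w` with `u, w ∈ T`, and each of these is a
sum of boundaries of paths of `A₂`, because the short-cut graph of `A₂` connects `T` and
boundaries telescope along its walks. So some subfamily of `A₂` has the same boundary as `A₁`,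
and adding it to `A₁` makes every degree even. The result is connected and covers `T`: `A₁`
alone connects `T`, and every path has an end in `T`.
-/

open Finset

section General

variable {V ι : Type*}

section Boundary

variable [DecidableEq V]

def edgeBoundary : Sym2 V → V → ZMod 2 :=
  Sym2.lift ⟨fun a b => Pi.single a 1 + Pi.single b 1, fun _ _ => add_comm _ _⟩

@[simp]
lemma edgeBoundary_mk (a b : V) : edgeBoundary s(a, b) = Pi.single a 1 + Pi.single b 1 :=
  rfl

lemma edgeBoundary_self (a : V) : edgeBoundary s(a, a) = 0 :=
  funext fun _ => CharTwo.add_self_eq_zero _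

lemma edgeBoundary_add (a b c : V) :
    edgeBoundary s(a, b) + edgeBoundary s(b, c) = edgeBoundary s(a, c) := by
  funext v
  simp only [edgeBoundary_mk, Pi.add_apply]
  rw [add_assoc, ← add_assoc (Pi.single b 1 v), CharTwo.add_self_eq_zero, zero_add]

lemma edgeBoundary_apply_of_ne {a b : V} (h : a ≠ b) (v : V) :
    edgeBoundary s(a, b) v = if v ∈ s(a, b) then 1 else 0 := by
  by_cases ha : v = a <;> by_cases hb : v = b <;> simp_all

end Boundary

lemma exists_finset_sum_eq_of_mem_span_zmod_two {M : Type*} [AddCommMonoid M]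
    [Module (ZMod 2) M] {f : ι → M} {y : M} (hy : y ∈ Submodule.span (ZMod 2) (Set.range f)) :
    ∃ S : Finset ι, ∑ i ∈ S, f i = y := by
  obtain ⟨c, rfl⟩ := Finsupp.mem_span_range_iff_exists_finsupp.1 hy
  have hc : ∀ x : ZMod 2, x ≠ 0 → x = 1 := by decide
  exact ⟨c.support, sum_congr rfl fun i hi => by simp [hc _ (Finsupp.mem_support_iff.1 hi)]⟩

namespace SimpleGraph

variable {G : SimpleGraph V}

section Parity

variable [DecidableEq V]

lemma Walk.countP_mem_edges_cast {a b : V} (p : G.Walk a b) (v : V) :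
    ((p.edges.countP (v ∈ ·) : ℕ) : ZMod 2) = edgeBoundary s(a, b) v := by
  induction p with
  | nil => rw [edgeBoundary_self]; rfl
  | @cons u c d h q ih =>
    rw [edges_cons, List.countP_cons, Nat.cast_add, ih, ← edgeBoundary_add u c d, Pi.add_apply,
      edgeBoundary_apply_of_ne h.ne, add_comm]
    split_ifs <;> simp_all

lemma Walk.IsTrail.card_filter_mem_edges_cast {a b : V} {p : G.Walk a b} (hp : p.IsTrail)
    (v : V) : ((#{e ∈ p.edges.toFinset | v ∈ e} : ℕ) : ZMod 2) = edgeBoundary s(a, b) v := by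
  rw [hp.edges_nodup.card_eq_countP, p.countP_mem_edges_cast]

lemma Subgraph.ncard_neighborSet_eq_card_filter {C : G.Subgraph} {E : Finset (Sym2 V)}
    (hE : ∀ u w, C.Adj u w ↔ s(u, w) ∈ E) (v : V) :
    (C.neighborSet v).ncard = #{e ∈ E | v ∈ e} := by
  rw [← Set.ncard_coe_finset]
  refine Set.ncard_congr (fun w _ => s(v, w)) (fun w hw => ?_)
    (fun _ _ _ _ => Sym2.congr_right.1) fun e he => ?_
  · simpa [hE] using hw
  · obtain ⟨he, hv⟩ := mem_filter.1 he
    obtain ⟨w, rfl⟩ := Sym2.mem_iff_exists.1 hv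
    exact ⟨w, (hE v w).2 he, rfl⟩

end Parity

lemma Subgraph.Connected.coe_reachable_of_le {K C : G.Subgraph} (hK : K.Connected)
    (hKC : K ≤ C) {u v : V} (hu : u ∈ K.verts) (hv : v ∈ K.verts) :
    C.coe.Reachable ⟨u, hKC.1 hu⟩ ⟨v, hKC.1 hv⟩ :=
  (hK ⟨u, hu⟩ ⟨v, hv⟩).map (Subgraph.inclusion hKC)

section WalkUnion

variable {a b : ι → V} (P : ∀ i, G.Walk (a i) (b i))

-- The isolated vertices `W` keep `T` covered even when all paths are trivial.
def walkUnion [DecidableEq V] (S : Finset ι) (W : Set V) : G.Subgraph where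
  verts := W ∪ {v | ∃ i ∈ S, v ∈ (P i).support}
  Adj u v := s(u, v) ∈ S.biUnion fun i => (P i).edges.toFinset
  adj_sub h := by
    obtain ⟨i, -, h⟩ := mem_biUnion.1 h
    exact (P i).adj_of_mem_edges (List.mem_toFinset.1 h)
  edge_vert h := by
    obtain ⟨i, hi, h⟩ := mem_biUnion.1 h
    exact Or.inr ⟨i, hi, (P i).fst_mem_support_of_mem_edges (List.mem_toFinset.1 h)⟩
  symm := ⟨fun _ _ h => by rwa [Sym2.eq_swap]⟩

variable {P} [DecidableEq V]

lemma toSubgraph_le_walkUnion {S : Finset ι} {i : ι} (hi : i ∈ S) (W : Set V) :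
    (P i).toSubgraph ≤ walkUnion P S W :=
  ⟨fun _ hv => Or.inr ⟨i, hi, (P i).mem_verts_toSubgraph.1 hv⟩, fun _ _ h =>
    mem_biUnion.2 ⟨i, hi, List.mem_toFinset.2 (Walk.adj_toSubgraph_iff_mem_edges.1 h)⟩⟩

lemma ncard_neighborSet_walkUnion_cast (hP : ∀ i, (P i).IsTrail)
    (hdisj : Pairwise fun i j => ∀ e ∈ (P i).edges, e ∉ (P j).edges) (S : Finset ι) (W : Set V)
    (v : V) : (((walkUnion P S W).neighborSet v).ncard : ZMod 2) =
      ∑ i ∈ S, edgeBoundary s(a i, b i) v := by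
  rw [Subgraph.ncard_neighborSet_eq_card_filter (fun _ _ => Iff.rfl), filter_biUnion,
    card_biUnion fun i _ j _ hij => disjoint_filter_filter <|
      Finset.disjoint_left.2 fun _ hi hj =>
        hdisj hij _ (List.mem_toFinset.1 hi) (List.mem_toFinset.1 hj), Nat.cast_sum]
  exact sum_congr rfl fun i _ => (hP i).card_filter_mem_edges_cast v

lemma connected_walkUnion {S : Finset ι} {T : Set V} {H₀ : SimpleGraph V}
    (hT : (H₀.induce T).Connected) (hH₀ : ∀ u w, H₀.Adj u w → ∃ i ∈ S, s(u, w) = s(a i, b i))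
    (ha : ∀ i ∈ S, a i ∈ T) : (walkUnion P S T).Connected := by
  have hP : ∀ i ∈ S, ∀ {x y}, x ∈ (P i).support → y ∈ (P i).support → ∀ hx hy,
      (walkUnion P S T).coe.Reachable ⟨x, hx⟩ ⟨y, hy⟩ := fun i hi _ _ hx hy _ _ =>
    (P i).toSubgraph_connected.coe_reachable_of_le (toSubgraph_le_walkUnion hi T)
      ((P i).mem_verts_toSubgraph.2 hx) ((P i).mem_verts_toSubgraph.2 hy)
  have hTT : ∀ u w : T, (H₀.induce T).Reachable u w →
      (walkUnion P S T).coe.Reachable ⟨u, Or.inl u.2⟩ ⟨w, Or.inl w.2⟩ := by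
    rintro u w ⟨p⟩
    induction p with
    | nil => rfl
    | @cons c m d h q ih =>
      obtain ⟨i, hi, he⟩ := hH₀ c.1 m.1 h
      have hends : ∀ x ∈ s(c.1, m.1), x ∈ (P i).support := by
        rw [he]
        rintro x hx
        rcases Sym2.mem_iff.1 hx with rfl | rfl
        exacts [(P i).start_mem_support, (P i).end_mem_support]
      exact (hP i hi (hends _ (Sym2.mem_mk_left _ _)) (hends _ (Sym2.mem_mk_right _ _)) _ _).trans
        ih
  obtain ⟨t⟩ := hT.nonempty
  rw [Subgraph.connected_iff', connected_iff_exists_forall_reachable]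
  refine ⟨⟨t, Or.inl t.2⟩, ?_⟩
  rintro ⟨x, hx | ⟨i, hi, hx⟩⟩
  · exact hTT t ⟨x, hx⟩ (hT.preconnected _ _)
  · exact (hTT t ⟨a i, ha i hi⟩ (hT.preconnected _ _)).trans
      (hP i hi (P i).start_mem_support hx _ _)

end WalkUnion

def shortcutGraph (a b : ι → V) : SimpleGraph V :=
  fromEdgeSet (⋃ i, {s(a i, b i)})

lemma exists_eq_of_shortcutGraph_adj {a b : ι → V} {u w : V}
    (h : (shortcutGraph a b).Adj u w) : ∃ i, s(u, w) = s(a i, b i) :=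
  Set.mem_iUnion.1 h.1

lemma edgeBoundary_mem_span_of_reachable [DecidableEq V] {a b : ι → V} {u w : V}
    (h : (shortcutGraph a b).Reachable u w) :
    edgeBoundary s(u, w) ∈
      Submodule.span (ZMod 2) (Set.range fun i => edgeBoundary s(a i, b i)) := by
  obtain ⟨p⟩ := h
  induction p with
  | nil => rw [edgeBoundary_self]; exact zero_mem _
  | @cons c m d h q ih =>
    obtain ⟨i, hi⟩ := exists_eq_of_shortcutGraph_adj h
    rw [← edgeBoundary_add c m d, hi]
    exact add_mem (Submodule.subset_span ⟨i, rfl⟩) ih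

end SimpleGraph

end General

namespace TConnector

variable {V : Type} {G H : SimpleGraph V} {T : Set V}

lemma mem_edgeSet_graph (A : TConnector G T) {i : A.ι} {e : Sym2 V}
    (he : e ∈ (A.walk i).edges) : e ∈ A.graph.edgeSet := by
  rw [TConnector.graph, edgeSet_fromEdgeSet]
  exact ⟨Set.mem_iUnion.2 ⟨i, he⟩,
    G.not_isDiag_of_mem_edgeSet ((A.walk i).edges_subset_edgeSet he)⟩

def transfer (A : TConnector G T) (h : A.graph ≤ H) : TConnector H T where
  ι := A.ι
  finite := A.finite
  a := A.a
  b := A.b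
  walk i := (A.walk i).transfer H fun _ he => edgeSet_mono h (A.mem_edgeSet_graph he)
  isPath i := (A.isPath i).transfer _
  a_mem := A.a_mem
  b_mem := A.b_mem
  internal i v hv := A.internal i v (by rwa [Walk.support_transfer] at hv)
  edgeDisj i j hij e := by simpa only [Walk.edges_transfer] using A.edgeDisj i j hij e
  shortcut_conn := A.shortcut_conn

lemma edgeSet_transfer (A : TConnector G T) (h : A.graph ≤ H) :
    (A.transfer h).edgeSet = A.edgeSet := by
  simp only [TConnector.edgeSet, transfer, Walk.edges_transfer]

lemma edgeBoundary_mem_span [DecidableEq V] (A : TConnector G T) {u w : V} (hu : u ∈ T)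
    (hw : w ∈ T) : edgeBoundary s(u, w) ∈
      Submodule.span (ZMod 2) (Set.range fun i => edgeBoundary s(A.a i, A.b i)) :=
  edgeBoundary_mem_span_of_reachable
    ((A.shortcut_conn ⟨u, hu⟩ ⟨w, hw⟩).map (Embedding.induce T).toHom)

def sumWalk (A₁ A₂ : TConnector G T) :
    ∀ j : A₁.ι ⊕ A₂.ι, G.Walk (Sum.elim A₁.a A₂.a j) (Sum.elim A₁.b A₂.b j)
  | .inl i => A₁.walk i
  | .inr i => A₂.walk i

lemma isTrail_sumWalk (A₁ A₂ : TConnector G T) (j : A₁.ι ⊕ A₂.ι) :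
    (sumWalk A₁ A₂ j).IsTrail := by
  cases j
  exacts [(A₁.isPath _).isTrail, (A₂.isPath _).isTrail]

lemma pairwise_disjoint_edges_sumWalk {A₁ A₂ : TConnector G T}
    (hdisj : Disjoint A₁.edgeSet A₂.edgeSet) :
    Pairwise fun j k => ∀ e ∈ (sumWalk A₁ A₂ j).edges, e ∉ (sumWalk A₁ A₂ k).edges := by
  have h12 : ∀ i j, ∀ e ∈ (A₁.walk i).edges, e ∉ (A₂.walk j).edges := fun i j _ hi hj =>
    Set.disjoint_left.1 hdisj (Set.mem_iUnion.2 ⟨i, hi⟩) (Set.mem_iUnion.2 ⟨j, hj⟩)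
  rintro (i | i) (j | j) hij e hi hj
  · exact A₁.edgeDisj i j (fun h => hij (congrArg _ h)) e hi hj
  · exact h12 i j e hi hj
  · exact h12 j i e hj hi
  · exact A₂.edgeDisj i j (fun h => hij (congrArg _ h)) e hi hj

theorem exists_connected_even_subgraph (A₁ A₂ : TConnector G T)
    (hdisj : Disjoint A₁.edgeSet A₂.edgeSet) :
    ∃ C : G.Subgraph, C.Connected ∧ T ⊆ C.verts ∧ ∀ v, Even (C.neighborSet v).ncard := by
  classical
  have := A₁.finite
  have := Fintype.ofFinite A₁.ι
  obtain ⟨S, hS⟩ := exists_finset_sum_eq_of_mem_span_zmod_two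
    (sum_mem fun i _ => A₂.edgeBoundary_mem_span (A₁.a_mem i) (A₁.b_mem i) :
      ∑ i, edgeBoundary s(A₁.a i, A₁.b i) ∈ _)
  refine ⟨walkUnion (sumWalk A₁ A₂) (univ.disjSum S) T, ?_, Set.subset_union_left, fun v => ?_⟩
  · refine connected_walkUnion A₁.shortcut_conn (fun u w h => ?_) ?_
    · obtain ⟨i, hi⟩ := exists_eq_of_shortcutGraph_adj h
      exact ⟨.inl i, by simp, hi⟩
    · rintro (i | i) -
      exacts [A₁.a_mem i, A₂.a_mem i]
  · rw [← ZMod.natCast_eq_zero_iff_even,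
      ncard_neighborSet_walkUnion_cast (isTrail_sumWalk A₁ A₂)
        (pairwise_disjoint_edges_sumWalk hdisj), sum_disjSum]
    simp only [Sum.elim_inl, Sum.elim_inr]
    rw [← Finset.sum_apply, ← Finset.sum_apply, hS, CharTwo.add_self_eq_zero]

end TConnector

theorem union_of_two_TConnectors_general {V : Type} {G : SimpleGraph V} {T : Set V}
    (A₁ A₂ : TConnector G T) (hdisj : Disjoint A₁.edgeSet A₂.edgeSet) :
    ∃ C : (A₁.graph ⊔ A₂.graph).Subgraph,
      C.Connected ∧ T ⊆ C.verts ∧ ∀ v, Even ((C.neighborSet v).ncard) := by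
  apply TConnector.exists_connected_even_subgraph (A₁.transfer le_sup_left)
    (A₂.transfer le_sup_right)
  rwa [TConnector.edgeSet_transfer, TConnector.edgeSet_transfer]

/-- The union of two edge-disjoint `T`-connectors contains a connected
subgraph with all degrees even containing every vertex of `T`. -/
theorem union_of_two_TConnectors {V : Type} [Fintype V] {G : SimpleGraph V} {T : Set V}
    (A₁ A₂ : TConnector G T) (hdisj : Disjoint A₁.edgeSet A₂.edgeSet) :
    ∃ C : (A₁.graph ⊔ A₂.graph).Subgraph,
      C.Connected ∧ T ⊆ C.verts ∧ ∀ v, Even ((C.neighborSet v).ncard) :=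
  union_of_two_TConnectors_general A₁ A₂ hdisj
end

section
/- Let G be a graph, W a set of vertices of G of degree 2 or 3, and R a closed trail in G. Suppose every vertex of W not visited by R has a neighbor visited by R. Then G contains a closed W-quasitrail that visits every vertex visited by R and every vertex of W. -/
open SimpleGraph

/-!
For every vertex `w ∈ W` missed by `R`, splice the excursion `v, w, v` into the walk at a
neighbour `v` of `w` on `R`. As `w` was unvisited, the edge `vw` was unused: it becomes a doubled
edge, and `w` is visited exactly once with `vw` as both its predecessor and successor edge. Later
excursions start at vertices of `R`, never at such a `w`, so they do not break earlier ones.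
-/

namespace List

variable {α : Type*}

theorem pair_infix_append {a b : α} :
    ∀ {l₁ l₂ : List α}, [a, b] <:+: l₁ ++ l₂ →
      [a, b] <:+: l₁ ∨ [a, b] <:+: l₂ ∨ l₁.getLast? = some a
  | [], _, h => Or.inr (Or.inl (by simpa using h))
  | c :: l₁, l₂, h => by
    rw [cons_append, infix_cons_iff] at h
    rcases h with h | h
    · obtain ⟨rfl, hb⟩ := cons_prefix_cons.mp h
      cases l₁ with
      | nil => exact Or.inr (Or.inr rfl)
      | cons d l₁ =>
        obtain ⟨rfl, -⟩ := cons_prefix_cons.mp hb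
        exact Or.inl (prefix_append [a, b] l₁).isInfix
    · rcases pair_infix_append h with h' | h' | h'
      · exact Or.inl (h'.trans (suffix_cons c l₁).isInfix)
      · exact Or.inr (Or.inl h')
      · cases l₁ with
        | nil => simp at h'
        | cons d l₁ => exact Or.inr (Or.inr (by rwa [getLast?_cons_cons]))

end List

namespace SimpleGraph.Walk

variable {V : Type} {G : SimpleGraph V}

theorem snd_eq_of_getLast?_darts {u v : V} (p : G.Walk u v) {d : G.Dart}
    (h : p.darts.getLast? = some d) : d.snd = v := by
  have hne : p.darts ≠ [] := by rintro hnil; simp [hnil] at h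
  rw [List.getLast?_eq_some_getLast hne, Option.some.injEq, getLast_darts_eq_lastDart] at h
  rw [← h]
  rfl

variable [DecidableEq V]

def addDetour {x y v w : V} (p : G.Walk x y) (hv : v ∈ p.support) (h : G.Adj v w) :
    G.Walk x y :=
  (p.takeUntil v hv).append (cons h (cons h.symm (p.dropUntil v hv)))

variable {x y v w : V} (p : G.Walk x y) (hv : v ∈ p.support) (h : G.Adj v w)

theorem darts_addDetour :
    (p.addDetour hv h).darts = (p.takeUntil v hv).darts ++
      ⟨(v, w), h⟩ :: ⟨(w, v), h.symm⟩ :: (p.dropUntil v hv).darts := by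
  simp [addDetour, darts_append]

theorem edges_addDetour_perm :
    (p.addDetour hv h).edges.Perm (s(v, w) :: s(v, w) :: p.edges) := by
  conv_rhs => rw [← p.take_spec hv, edges_append]
  rw [addDetour, edges_append, edges_cons, edges_cons, Sym2.eq_swap (a := w)]
  exact List.perm_middle.trans (List.perm_middle.cons _)

theorem support_tail_addDetour_perm :
    (p.addDetour hv h).support.tail.Perm (w :: v :: p.support.tail) := by
  conv_rhs => rw [← p.take_spec hv, tail_support_append]
  rw [addDetour, tail_support_append, support_cons, support_cons, List.tail_cons,
    ← cons_tail_support (p.dropUntil v hv)]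
  exact List.perm_middle.trans (List.perm_middle.cons _)

theorem mem_support_addDetour {u : V} :
    u ∈ (p.addDetour hv h).support ↔ u = w ∨ u ∈ p.support := by
  rw [mem_support_iff, (p.support_tail_addDetour_perm hv h).mem_iff, p.mem_support_iff]
  have := p.mem_support_iff.mp hv
  grind

theorem detour_infix_darts_addDetour :
    [⟨(v, w), h⟩, ⟨(w, v), h.symm⟩] <:+: (p.addDetour hv h).darts := by
  rw [darts_addDetour]
  exact ⟨(p.takeUntil v hv).darts, (p.dropUntil v hv).darts, by simp⟩

theorem infix_darts_addDetour {d₁ d₂ : G.Dart} (hd : [d₁, d₂] <:+: p.darts)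
    (hne : d₁.snd ≠ v) : [d₁, d₂] <:+: (p.addDetour hv h).darts := by
  rw [← p.take_spec hv, darts_append] at hd
  rw [darts_addDetour]
  rcases List.pair_infix_append hd with hd | hd | hd
  · exact hd.trans (List.prefix_append _ _).isInfix
  · exact hd.trans
      ⟨(p.takeUntil v hv).darts ++ [⟨(v, w), h⟩, ⟨(w, v), h.symm⟩], [], by simp⟩
  · exact absurd ((p.takeUntil v hv).snd_eq_of_getLast?_darts hd) hne

end SimpleGraph.Walk

section DetourQuasitrail

variable {V : Type} [DecidableEq V] {G : SimpleGraph V}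

/-- The invariant of the construction, a strengthening of `IsClosedQuasitrail`: every doubled
edge leads to a vertex of `W \ A`, and its two darts are consecutive in `p.darts` itself, not only
cyclically. Splicing in an excursion from a vertex of `A` preserves it. -/
def IsDetourQuasitrail (W A : Set V) {x : V} (p : G.Walk x x) : Prop :=
  (∀ e, p.edges.count e ≤ 2) ∧
  ∀ e, p.edges.count e = 2 →
    ∃ w u, w ∈ W \ A ∧ e = s(u, w) ∧ p.support.tail.count w = 1 ∧
      ∃ d₁ d₂ : G.Dart, d₁.toProd = (u, w) ∧ d₂.toProd = (w, u) ∧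
        [d₁, d₂] <:+: p.darts

variable {W A : Set V} {x : V}

theorem SimpleGraph.Walk.IsTrail.isDetourQuasitrail {p : G.Walk x x} (hp : p.IsTrail) :
    IsDetourQuasitrail W A p := by
  have hcount := List.nodup_iff_count_le_one.mp hp.edges_nodup
  exact ⟨fun e => (hcount e).trans one_le_two, fun e he => absurd (hcount e) (by omega)⟩

theorem IsDetourQuasitrail.isClosedQuasitrail {p : G.Walk x x}
    (hp : IsDetourQuasitrail W A p) : IsClosedQuasitrail G W p := by
  refine ⟨hp.1, fun e he => ?_⟩
  obtain ⟨w, u, hw, he, hc, d₁, d₂, hd₁, hd₂, hd⟩ := hp.2 e he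
  exact ⟨w, u, hw.1, he, hc, d₁, d₂, hd₁, hd₂,
    hd.trans (List.prefix_append _ _).isInfix⟩

theorem IsDetourQuasitrail.addDetour {p : G.Walk x x} (hp : IsDetourQuasitrail W A p)
    {v w : V} (hv : v ∈ p.support) (h : G.Adj v w) (hvA : v ∈ A) (hw : w ∈ W \ A)
    (hwp : w ∉ p.support) : IsDetourQuasitrail W A (p.addDetour hv h) := by
  have hvw : v ≠ w := fun hvw => hwp (hvw ▸ hv)
  have hcount (e : Sym2 V) : (p.addDetour hv h).edges.count e =
      p.edges.count e + if e = s(v, w) then 2 else 0 := by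
    rw [(p.edges_addDetour_perm hv h).count_eq]
    rcases eq_or_ne e s(v, w) with rfl | he
    · simp
    · simp [he, he.symm]
  have hfresh : p.edges.count s(v, w) = 0 :=
    List.count_eq_zero.mpr fun he => hwp (p.snd_mem_support_of_mem_edges he)
  have hcount_tail (u : V) (huw : u ≠ w) (huv : u ≠ v) :
      (p.addDetour hv h).support.tail.count u = p.support.tail.count u := by
    rw [(p.support_tail_addDetour_perm hv h).count_eq]
    simp [huw.symm, huv.symm]
  refine ⟨fun e => ?_, fun e he => ?_⟩
  · rw [hcount]
    split_ifs with hev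
    · simp [hev, hfresh]
    · simpa using hp.1 e
  rw [hcount] at he
  split_ifs at he with hev
  · refine ⟨w, v, hw, hev, ?_, _, _, rfl, rfl, p.detour_infix_darts_addDetour hv h⟩
    rw [(p.support_tail_addDetour_perm hv h).count_eq]
    simp [hvw, List.count_eq_zero.mpr fun hw' => hwp (List.mem_of_mem_tail hw')]
  · obtain ⟨w', u, hw', rfl, hc, d₁, d₂, hd₁, hd₂, hd⟩ := hp.2 e (by simpa using he)
    have hw'p : w' ∈ p.support := List.mem_of_mem_tail (List.count_pos_iff.mp (by omega))
    have hw'w : w' ≠ w := fun h => hwp (h ▸ hw'p)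
    have hw'v : w' ≠ v := fun h => hw'.2 (h ▸ hvA)
    refine ⟨w', u, hw', rfl, (hcount_tail w' hw'w hw'v).trans hc, d₁, d₂, hd₁, hd₂,
      p.infix_darts_addDetour hv h hd ?_⟩
    rwa [hd₁]

theorem IsDetourQuasitrail.exists_covering {p : G.Walk x x} (hp : IsDetourQuasitrail W A p)
    (hA : ∀ u ∈ A, u ∈ p.support)
    (hnbr : ∀ w ∈ W, w ∉ A → ∃ v, G.Adj v w ∧ v ∈ A)
    (S : Finset V) (hS : ↑S ⊆ W) :
    ∃ q : G.Walk x x, IsDetourQuasitrail W A q ∧ p.support ⊆ q.support ∧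
      ∀ w ∈ S, w ∈ q.support := by
  induction S using Finset.induction_on with
  | empty => exact ⟨p, hp, List.Subset.refl _, by simp⟩
  | insert w S _ ih =>
    rw [Finset.coe_insert, Set.insert_subset_iff] at hS
    obtain ⟨q, hq, hpq, hSq⟩ := ih hS.2
    by_cases hwq : w ∈ q.support
    · exact ⟨q, hq, hpq, by simpa [hwq] using hSq⟩
    have hwA : w ∉ A := fun hwA => hwq (hpq (hA w hwA))
    obtain ⟨v, hvw, hvA⟩ := hnbr w hS.1 hwA
    have hvq : v ∈ q.support := hpq (hA v hvA)
    refine ⟨q.addDetour hvq hvw, hq.addDetour hvq hvw hvA ⟨hS.1, hwA⟩ hwq, ?_, ?_⟩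
    · exact List.Subset.trans hpq fun _ hu => (q.mem_support_addDetour hvq hvw).mpr (Or.inr hu)
    · simpa [q.mem_support_addDetour hvq hvw] using fun u hu => Or.inr (hSq u hu)

end DetourQuasitrail

theorem quasitrail_from_trail_general {V : Type} [Fintype V] [DecidableEq V]
    (G : SimpleGraph V) (W : Set V)
    {x : V} (R : G.Walk x x) (hR : R.IsTrail)
    (hnbr : ∀ w ∈ W, w ∉ R.support → ∃ v, G.Adj v w ∧ v ∈ R.support) :
    ∃ p : G.Walk x x, IsClosedQuasitrail G W p ∧
      (∀ u ∈ R.support, u ∈ p.support) ∧ ∀ w ∈ W, w ∈ p.support := by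
  have hR' : IsDetourQuasitrail W {u | u ∈ R.support} R := hR.isDetourQuasitrail
  obtain ⟨q, hq, hRq, hWq⟩ :=
    hR'.exists_covering (fun _ hu => hu) hnbr (Set.toFinite W).toFinset (by simp)
  exact ⟨q, hq.isClosedQuasitrail, fun _ hu => hRq hu, fun w hw => hWq w (by simpa using hw)⟩

/-- Given a closed trail `R` and a set `W` of vertices of degree 2
or 3 such that every vertex of `W` not visited by `R` has a neighbor visited by
`R`, the graph contains a closed `W`-quasitrail visiting every vertex visited by
`R` and every vertex of `W`. -/
theorem quasitrail_from_trail {V : Type} [Fintype V] [DecidableEq V]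
    (G : SimpleGraph V) (W : Set V)
    (hW : ∀ w ∈ W, (G.neighborSet w).ncard = 2 ∨ (G.neighborSet w).ncard = 3)
    {x : V} (R : G.Walk x x) (hR : R.IsTrail)
    (hnbr : ∀ w ∈ W, w ∉ R.support → ∃ v, G.Adj v w ∧ v ∈ R.support) :
    ∃ p : G.Walk x x, IsClosedQuasitrail G W p ∧
      (∀ u ∈ R.support, u ∈ p.support) ∧ ∀ w ∈ W, w ∈ p.support :=
  quasitrail_from_trail_general G W R hR hnbr
end

section
/- Let H be a hypergraph and X' a set of hyperedges of H. If X' is not a vertex cut of the line graph L(H) separating two hyperedges, i.e., if all hyperedges of H outside X' lie in a single connected component of L(H) − X', then for any two vertices s₁, s₂ of H each incident with some hyperedge outside X', the edges of the incidence graph IG(H) corresponding to incidences with hyperedges in X' do not separate s₁ from s₂ in IG(H). -/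
open SimpleGraph

namespace IncidenceGraph

variable {V E : Type} (He : E → Finset V) (X' : Set E)

def incidenceEdgesOf : Set (Sym2 (V ⊕ E)) :=
  {ed | ∃ (f : E) (v : V), f ∈ X' ∧ v ∈ He f ∧ ed = s(Sum.inl v, Sum.inr f)}

variable {He X'}

theorem incGraph_adj_inl_inr {v : V} {e : E} :
    (incGraph He).Adj (Sum.inl v) (Sum.inr e) ↔ v ∈ He e := by
  simp [incGraph]

theorem mk_inl_inr_notMem_incidenceEdgesOf {v : V} {e : E} (he : e ∉ X') :
    s(Sum.inl v, Sum.inr e) ∉ incidenceEdgesOf He X' := by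
  rintro ⟨f, w, hf, -, heq⟩
  obtain ⟨-, hfe⟩ | ⟨hvf, -⟩ := Sym2.eq_iff.mp heq
  · exact he (Sum.inr_injective hfe ▸ hf)
  · exact Sum.inl_ne_inr hvf

theorem reachable_inl_inr_of_notMem {v : V} {e : E} (he : e ∉ X') (hv : v ∈ He e) :
    ((incGraph He).deleteEdges (incidenceEdgesOf He X')).Reachable (Sum.inl v) (Sum.inr e) :=
  Adj.reachable <| (deleteEdges_adj ..).mpr
    ⟨incGraph_adj_inl_inr.mpr hv, mk_inl_inr_notMem_incidenceEdgesOf he⟩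

/-- Each line-graph edge `fg` outside `X'` is replaced by the path `f – v – g` through a
common vertex `v`, which avoids the incidences of `X'`. -/
theorem reachable_inr_of_reachable_induce_lineGraph {f g : ↥(X'ᶜ)}
    (hfg : ((hLineGraph He).induce (X'ᶜ : Set E)).Reachable f g) :
    ((incGraph He).deleteEdges (incidenceEdgesOf He X')).Reachable
      (Sum.inr f.1) (Sum.inr g.1) := by
  obtain ⟨p⟩ := hfg
  induction p with
  | nil => rfl
  | @cons f h _ hadj _ ih =>
    obtain ⟨-, v, hvf, hvh⟩ := hadj
    exact ((reachable_inl_inr_of_notMem f.2 hvf).symm.trans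
      (reachable_inl_inr_of_notMem h.2 hvh)).trans ih

end IncidenceGraph

open IncidenceGraph in
/-- If all hyperedges outside `X'` lie in one component of
`L(H) − X'`, then the incidence edges corresponding to `X'` do not separate in
`IG(H)` any two vertices each lying in a hyperedge outside `X'`. -/
theorem incidence_edges_do_not_separate {V E : Type} (He : E → Finset V) (X' : Set E)
    (hcomp : ∀ f g : ↥(X'ᶜ), ((hLineGraph He).induce (X'ᶜ : Set E)).Reachable f g)
    (s₁ s₂ : V) (h₁ : ∃ f, f ∉ X' ∧ s₁ ∈ He f) (h₂ : ∃ g, g ∉ X' ∧ s₂ ∈ He g) :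
    ((incGraph He).deleteEdges
        {ed | ∃ (f : E) (v : V), f ∈ X' ∧ v ∈ He f ∧
          ed = s(Sum.inl v, Sum.inr f)}).Reachable (Sum.inl s₁) (Sum.inl s₂) := by
  obtain ⟨f, hf, hs₁⟩ := h₁
  obtain ⟨g, hg, hs₂⟩ := h₂
  change ((incGraph He).deleteEdges (incidenceEdgesOf He X')).Reachable _ _
  exact (reachable_inl_inr_of_notMem hf hs₁).trans <|
    (reachable_inr_of_reachable_induce_lineGraph (hcomp ⟨f, hf⟩ ⟨g, hg⟩)).trans
      (reachable_inl_inr_of_notMem hg hs₂).symm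
end

section
/- A closed walk obtained from a closed trail R by, for each vertex w in a set W not visited by R (with W consisting of vertices of degree 2 or 3), inserting a detour v, vw, w, wv, v at one occurrence of a chosen neighbor v of w that is visited by R (distinct vertices w using distinct insertions), is a closed W-quasitrail. -/
open SimpleGraph

/-- Walks obtained from `R` by repeatedly inserting a detour `v, vw, w, wv, v` at an
occurrence of a vertex `v` of `R`, where `w ∈ W` is not on the current walk. -/
inductive InsertDetours {V : Type} (G : SimpleGraph V) (W : Set V) {x : V}
    (R : G.Walk x x) : G.Walk x x → Prop
  | base : InsertDetours G W R R
  | step {p : G.Walk x x} {v w : V} (q₁ : G.Walk x v) (q₂ : G.Walk v x)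
      (hp : InsertDetours G W R p) (hdec : p = q₁.append q₂)
      (hw : w ∈ W) (hwp : w ∉ p.support) (hvR : v ∈ R.support) (hadj : G.Adj v w) :
      InsertDetours G W R
        (q₁.append ((SimpleGraph.Walk.cons hadj
          (SimpleGraph.Walk.cons hadj.symm SimpleGraph.Walk.nil)).append q₂))

/-!
Every inserted detour `v, w, v` traverses the new edge `vw` twice in a row, through a vertex
`w ∈ W` that the walk visits nowhere else. Later detours are inserted at vertices of `R`, which
are never such a `w`, so they neither split the two darts of an earlier detour nor revisit its
vertex. Hence, by induction along the insertions, every edge traversed twice is a detour edge,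
while every other edge keeps the multiplicity at most one it has in the trail `R`.
-/

theorem List.pair_infix_append_middle {α : Type*} {a b : α} {l₁ l₂ : List α} (l : List α)
    (h : [a, b] <:+: l₁ ++ l₂) (ha : l₁.getLast? ≠ some a) :
    [a, b] <:+: l₁ ++ l ++ l₂ := by
  obtain ⟨s, t, hst⟩ := h
  rw [List.append_assoc, List.append_eq_append_iff] at hst
  rcases hst with ⟨_ | ⟨c₀, _ | ⟨c₁, c⟩⟩, rfl, hc⟩ | ⟨c, rfl, rfl⟩
  · exact ⟨s ++ l, t, by simp [hc]⟩
  · simp_all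
  · obtain ⟨rfl, rfl, rfl⟩ : a = c₀ ∧ b = c₁ ∧ t = c ++ l₂ := by simpa using hc
    exact ⟨s, c ++ l ++ l₂, by simp⟩
  · exact ⟨l₁ ++ l ++ c, t, by simp⟩

namespace SimpleGraph.Walk

variable {V : Type*} {G : SimpleGraph V}

theorem snd_eq_of_getLast?_darts_eq_some {v w : V} {p : G.Walk v w} {d : G.Dart}
    (h : p.darts.getLast? = some d) : d.snd = w := by
  have hne : p.darts ≠ [] := by rintro h'; simp [h'] at h
  rw [List.getLast?_eq_some_getLast hne, getLast_darts_eq_lastDart, Option.some_inj] at h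
  subst h
  rfl

variable {x y v w : V}

def insertDetour (q₁ : G.Walk x v) (hadj : G.Adj v w) (q₂ : G.Walk v y) : G.Walk x y :=
  q₁.append ((cons hadj (cons hadj.symm nil)).append q₂)

variable (q₁ : G.Walk x v) (hadj : G.Adj v w) (q₂ : G.Walk v y)

theorem darts_insertDetour :
    (q₁.insertDetour hadj q₂).darts =
      q₁.darts ++ ⟨(v, w), hadj⟩ :: ⟨(w, v), hadj.symm⟩ :: q₂.darts := by
  simp [insertDetour]

theorem edges_insertDetour_perm :
    (q₁.insertDetour hadj q₂).edges.Perm (s(v, w) :: s(v, w) :: (q₁.append q₂).edges) := by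
  simp only [insertDetour, edges_append, edges_cons, edges_nil, List.cons_append,
    List.nil_append, Sym2.eq_swap]
  exact List.perm_middle.trans (List.perm_middle.cons _)

theorem support_insertDetour_perm :
    (q₁.insertDetour hadj q₂).support.Perm (w :: v :: (q₁.append q₂).support) := by
  simp only [insertDetour, support_append, support_cons, support_nil, List.cons_append,
    List.nil_append, List.tail_cons]
  exact List.perm_middle.trans (List.perm_middle.cons _)

theorem support_tail_insertDetour_perm :
    (q₁.insertDetour hadj q₂).support.tail.Perm
      (w :: v :: (q₁.append q₂).support.tail) := by
  simp only [insertDetour, support_append, support_cons, support_nil, List.cons_append,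
    List.nil_append, List.tail_cons, List.tail_append_of_ne_nil q₁.support_ne_nil]
  exact List.perm_middle.trans (List.perm_middle.cons _)

variable [DecidableEq V]

/-- `p` passes through `w` exactly once, and does so by the detour `u, w, u`. -/
def IsDetourAt (p : G.Walk x y) (u w : V) : Prop :=
  p.support.tail.count w = 1 ∧
    ∃ d₁ d₂ : G.Dart, d₁.toProd = (u, w) ∧ d₂.toProd = (w, u) ∧
      [d₁, d₂] <:+: p.darts

theorem isDetourAt_insertDetour (hw : w ∉ (q₁.append q₂).support) :
    (q₁.insertDetour hadj q₂).IsDetourAt v w := by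
  refine ⟨?_, ⟨(v, w), hadj⟩, ⟨(w, v), hadj.symm⟩, rfl, rfl, ?_⟩
  · have hw' : w ∉ (q₁.append q₂).support.tail := fun h ↦ hw (List.mem_of_mem_tail h)
    simp [(support_tail_insertDetour_perm q₁ hadj q₂).count_eq,
      List.count_eq_zero_of_not_mem hw', hadj.ne]
  · rw [darts_insertDetour]
    exact ⟨q₁.darts, q₂.darts, by simp⟩

theorem IsDetourAt.insertDetour {u z : V} (h : (q₁.append q₂).IsDetourAt u z) (hzv : z ≠ v)
    (hzw : z ≠ w) : (q₁.insertDetour hadj q₂).IsDetourAt u z := by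
  obtain ⟨hcount, d₁, d₂, h₁, h₂, hinf⟩ := h
  refine ⟨?_, d₁, d₂, h₁, h₂, ?_⟩
  · simp [(support_tail_insertDetour_perm q₁ hadj q₂).count_eq, hcount, hzv.symm, hzw.symm]
  · have hlast : q₁.darts.getLast? ≠ some d₁ := fun hd ↦
      hzv ((congrArg Prod.snd h₁).symm.trans (snd_eq_of_getLast?_darts_eq_some hd))
    rw [darts_append] at hinf
    simpa [darts_insertDetour] using
      List.pair_infix_append_middle [⟨(v, w), hadj⟩, ⟨(w, v), hadj.symm⟩] hinf hlast

end SimpleGraph.Walk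

namespace InsertDetours

open Walk

variable {V : Type} {G : SimpleGraph V} {W : Set V} {x : V} {R p : G.Walk x x}

theorem support_subset (h : InsertDetours G W R p) : R.support ⊆ p.support := by
  induction h with
  | base => exact List.Subset.refl _
  | step q₁ q₂ _ hdec _ _ _ hadj ih =>
    subst hdec
    exact fun y hy ↦ (support_insertDetour_perm q₁ hadj q₂).symm.subset
      (List.mem_cons_of_mem _ (List.mem_cons_of_mem _ (ih hy)))

variable [DecidableEq V]

theorem count_edges_le_two (hR : R.IsTrail) (h : InsertDetours G W R p) (e : Sym2 V) :
    p.edges.count e ≤ 2 := by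
  induction h with
  | base => exact (List.nodup_iff_count_le_one.mp hR.edges_nodup e).trans one_le_two
  | @step _ v w q₁ q₂ _ hdec _ hwp _ hadj ih =>
    subst hdec
    change (q₁.insertDetour hadj q₂).edges.count e ≤ 2
    rw [(edges_insertDetour_perm q₁ hadj q₂).count_eq]
    by_cases he : e = s(v, w)
    · subst he
      have hnew : s(v, w) ∉ (q₁.append q₂).edges := fun h ↦
        hwp (snd_mem_support_of_mem_edges _ h)
      rw [List.count_cons_self, List.count_cons_self, List.count_eq_zero_of_not_mem hnew]
    · simpa [List.count_cons, Ne.symm he] using ih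

theorem exists_isDetourAt (hR : R.IsTrail) (h : InsertDetours G W R p) {e : Sym2 V}
    (he : p.edges.count e = 2) :
    ∃ w u, w ∈ W ∧ w ∉ R.support ∧ e = s(u, w) ∧ p.IsDetourAt u w := by
  induction h with
  | base =>
    have := List.nodup_iff_count_le_one.mp hR.edges_nodup e
    omega
  | @step _ v w q₁ q₂ hp hdec hw hwp hvR hadj ih =>
    subst hdec
    change (q₁.insertDetour hadj q₂).edges.count e = 2 at he
    rw [(edges_insertDetour_perm q₁ hadj q₂).count_eq] at he
    by_cases hnew : e = s(v, w)
    · exact ⟨w, v, hw, fun hwR ↦ hwp (hp.support_subset hwR), hnew,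
        isDetourAt_insertDetour q₁ hadj q₂ hwp⟩
    · obtain ⟨z, u, hzW, hzR, rfl, hz⟩ :=
        ih (by simpa [List.count_cons, Ne.symm hnew] using he)
      have hzp : z ∈ (q₁.append q₂).support :=
        List.mem_of_mem_tail (List.count_pos_iff.mp (by rw [hz.1]; exact one_pos))
      exact ⟨z, u, hzW, hzR, rfl, hz.insertDetour q₁ hadj q₂ (fun h ↦ hzR (h ▸ hvR))
        (fun h ↦ hwp (h ▸ hzp))⟩

end InsertDetours

theorem insertDetours_isClosedQuasitrail_general {V : Type} [DecidableEq V]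
    (G : SimpleGraph V) (W : Set V)
    {x : V} (R : G.Walk x x) (hR : R.IsTrail)
    (p : G.Walk x x) (h : InsertDetours G W R p) :
    IsClosedQuasitrail G W p := by
  refine ⟨h.count_edges_le_two hR, fun e he ↦ ?_⟩
  obtain ⟨w, u, hw, -, rfl, hcount, d₁, d₂, h₁, h₂, hinf⟩ := h.exists_isDetourAt hR he
  exact ⟨w, u, hw, rfl, hcount, d₁, d₂, h₁, h₂,
    hinf.trans (List.prefix_append _ _).isInfix⟩

/-- A closed walk obtained from a closed trail `R` by inserting, for
vertices `w ∈ W` (of degree 2 or 3) not visited so far, detours `v, vw, w, wv, v`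
at occurrences of neighbors `v` visited by `R`, is a closed `W`-quasitrail. -/
theorem insertDetours_isClosedQuasitrail {V : Type} [DecidableEq V]
    (G : SimpleGraph V) (W : Set V)
    (hW : ∀ w ∈ W, (G.neighborSet w).ncard = 2 ∨ (G.neighborSet w).ncard = 3)
    {x : V} (R : G.Walk x x) (hR : R.IsTrail)
    (p : G.Walk x x) (h : InsertDetours G W R p) :
    IsClosedQuasitrail G W p :=
  insertDetours_isClosedQuasitrail_general G W R hR p h
end
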